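/- Assume (H1)–(H5) and let x₀ ∈ 𝕊 satisfy ∇h(x₀)·[f₁,f₂](x₀) < 0. Let r be a drop generator with primitive drop R of period τ₀ such that 𝐒(x₀)(R(t)) ≤ 0 for every t ∈ ℝ, and assume in addition that Area(R)|₀^s ≥ C s³ for all s ∈ [0, τ₀] for some C > 0. Then there exists τ̄ > 0 such that for every τ ∈ (0, τ̄), setting ω := τ₀/τ and letting y be the solution of ẏ(t) = r¹(ωt) f₁(y(t)) + r²(ωt) f₂(y(t)) with y(0) = x₀, one has h(y(t)) − h(x₀) ≤ (C/2) ∇h(x₀)·[f₁,f₂](x₀) · ω t³ ≤ −(C α τ₀ / 2) · t³/τ for all t ∈ [0, τ], where α is the constant of (H4). -/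

import Mathlib

/-!
Along the trajectory, `d/dt h(y) = Σᵢ uᵢ ψᵢ(y)` with `uᵢ(t) = Rᵢ'(ωt)` and `ψᵢ = ∇h·fᵢ`, and the
`ψᵢ` vanish at the singular point `x₀`. As `h` is `C^{2,1}`, `Dψᵢ` is Lipschitz at `x₀`, so
`ψᵢ(y) = Dψᵢ(x₀)(y - x₀) + O(t²)`; moreover `y(t) - x₀ = Σⱼ Uⱼ(t) fⱼ(x₀) + O(t²)` with
`Uⱼ(t) = ω⁻¹ Rⱼ(ωt)`. Hence `d/dt h(y) = Σᵢⱼ Aᵢⱼ uᵢ Uⱼ + O(t²)`, where `Aᵢⱼ = L_{fⱼ} L_{fᵢ} h (x₀)`.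
For a `2 × 2` matrix, `Σᵢⱼ Aᵢⱼ uᵢ Uⱼ` is the derivative of `½ A[U] + (A₂₁ - A₁₂) Area(U)`; here the
quadratic form `A[·]` is `𝐒(x₀)` and `A₂₁ - A₁₂ = ∇h·[f₁,f₂](x₀) < 0`. Rescaling the drop, the
quadratic term is `≤ 0` and the area term is `≤ ∇h·[f₁,f₂](x₀) C ω t³`, which absorbs the `O(t³)`
error once `τ` is small.
-/

open MeasureTheory Set

noncomputable section

/-- `n`-dimensional Euclidean space. -/
abbrev Euc (n : ℕ) : Type := EuclideanSpace ℝ (Fin n)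

/-- The Lie bracket `[f₁, f₂] := Df₂ f₁ − Df₁ f₂`. -/
def lieBracket {n : ℕ} (f₁ f₂ : Euc n → Euc n) (x : Euc n) : Euc n :=
  fderiv ℝ f₂ x (f₁ x) - fderiv ℝ f₁ x (f₂ x)

/-- Entries of the matrix `S(x)`:
`S_{ℓm}(x) = ½ ∇h(x)·(Df_ℓ(x) f_m(x) + Df_m(x) f_ℓ(x)) + f_ℓ(x)·D²h(x) f_m(x)`. -/
def Smat {n : ℕ} (f₁ f₂ : Euc n → Euc n) (h : Euc n → ℝ) (x : Euc n) (l m : Fin 2) : ℝ :=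
  (1 / 2) * fderiv ℝ h x (fderiv ℝ (![f₁, f₂] l) x (![f₁, f₂] m x)
      + fderiv ℝ (![f₁, f₂] m) x (![f₁, f₂] l x))
    + fderiv ℝ (fun y => fderiv ℝ h y (![f₁, f₂] m x)) x (![f₁, f₂] l x)

/-- The quadratic form `𝐒(x)` associated to the symmetric matrix `S(x)`. -/
def Sform {n : ℕ} (f₁ f₂ : Euc n → Euc n) (h : Euc n → ℝ) (x : Euc n) (w : Fin 2 → ℝ) : ℝ :=
  ∑ l : Fin 2, ∑ m : Fin 2, Smat f₁ f₂ h x l m * w l * w m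

/-- The singular set `𝕊 = {x ∈ C : ∇h·f₁ = ∇h·f₂ = 0}`. -/
def singSet {n : ℕ} (f₁ f₂ : Euc n → Euc n) (h : Euc n → ℝ) : Set (Euc n) :=
  {x | h x ≤ 0 ∧ fderiv ℝ h x (f₁ x) = 0 ∧ fderiv ℝ h x (f₂ x) = 0}

/-- Hypothesis (H1): `f₁, f₂` are `C²`, Lipschitz with a common constant, and
`‖f₁ x‖ + ‖f₂ x‖` is uniformly bounded. -/
def H1 {n : ℕ} (f₁ f₂ : Euc n → Euc n) : Prop :=
  ContDiff ℝ 2 f₁ ∧ ContDiff ℝ 2 f₂ ∧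
    (∃ kf : NNReal, LipschitzWith kf f₁ ∧ LipschitzWith kf f₂) ∧
    ∃ k₀ : ℝ, ∀ x, ‖f₁ x‖ + ‖f₂ x‖ ≤ k₀

/-- Hypothesis (H3): `h` is `C^{2,1}`, Lipschitz, `C = {h ≤ 0}` is nonempty and
`∇h ≠ 0` on `{h = 0}`. -/
def H3 {n : ℕ} (h : Euc n → ℝ) : Prop :=
  ContDiff ℝ 2 h ∧ (∃ M : NNReal, LipschitzWith M (iteratedFDeriv ℝ 2 h)) ∧
    (∃ kh : NNReal, LipschitzWith kh h) ∧ (∃ x, h x ≤ 0) ∧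
    ∀ x, h x = 0 → fderiv ℝ h x ≠ 0

/-- Hypothesis (H4): transversality of the Lie bracket on the singular set. -/
def H4 {n : ℕ} (f₁ f₂ : Euc n → Euc n) (h : Euc n → ℝ) : Prop :=
  ∃ α > 0, ∀ x ∈ singSet f₁ f₂ h, α < |fderiv ℝ h x (lieBracket f₁ f₂ x)|

/-- Hypothesis (H5): on the singular set, `𝐒(x)` is negative semidefinite or indefinite. -/
def H5 {n : ℕ} (f₁ f₂ : Euc n → Euc n) (h : Euc n → ℝ) : Prop :=
  ∀ x ∈ singSet f₁ f₂ h,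
    (∀ w : Fin 2 → ℝ, Sform f₁ f₂ h x w ≤ 0) ∨
      ((∃ w : Fin 2 → ℝ, Sform f₁ f₂ h x w < 0) ∧ (∃ w : Fin 2 → ℝ, 0 < Sform f₁ f₂ h x w))

/-- Hypothesis (H6): near the singular set,
`√((∇h·f₁)² + (∇h·f₂)²) ≥ d₀ · dist(x, 𝕊)`. -/
def H6 {n : ℕ} (f₁ f₂ : Euc n → Euc n) (h : Euc n → ℝ) : Prop :=
  ∃ δ > 0, ∃ d₀ > 0, ∀ x : Euc n, Metric.infDist x (singSet f₁ f₂ h) ≤ δ →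
    d₀ * Metric.infDist x (singSet f₁ f₂ h) ≤
      Real.sqrt ((fderiv ℝ h x (f₁ x)) ^ 2 + (fderiv ℝ h x (f₂ x)) ^ 2)

/-- The area swept by the planar curve `R = (R₁, R₂)` on `[a, b]`:
`Area(R)|_a^b = ½ ∫_a^b (R₂' R₁ − R₁' R₂)`. -/
def sweptArea (R₁ R₂ : ℝ → ℝ) (a b : ℝ) : ℝ :=
  (1 / 2) * ∫ s in a..b, (deriv R₂ s * R₁ s - deriv R₁ s * R₂ s)

/-- The excess swept by the planar curve `R = (R₁, R₂)` on `[0, t]`. -/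
def excess (R₁ R₂ : ℝ → ℝ) (t : ℝ) : ℝ :=
  ∑ l : Fin 2, ∑ m : Fin 2,
    ∫ s in (0:ℝ)..t,
      (∫ ξ in (0:ℝ)..s, |ξ * deriv (![R₁, R₂] l) ξ|) * |deriv (![R₁, R₂] m) s|

/-- `R = (R₁, R₂)` is a drop of period `τ₀`: a simple closed `τ₀`-periodic curve through `0`,
parameterized by arc length, with Lipschitz derivative, strictly increasing swept area on
`[0, τ₀]`, and excess controlled by the area. -/
structure IsDrop (R₁ R₂ : ℝ → ℝ) (τ₀ : ℝ) : Prop where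
  pos : 0 < τ₀
  diff₁ : Differentiable ℝ R₁
  diff₂ : Differentiable ℝ R₂
  init₁ : R₁ 0 = 0
  init₂ : R₂ 0 = 0
  unit : ∀ t, (deriv R₁ t) ^ 2 + (deriv R₂ t) ^ 2 = 1
  per₁ : Function.Periodic R₁ τ₀
  per₂ : Function.Periodic R₂ τ₀
  simple : Set.InjOn (fun t => (R₁ t, R₂ t)) (Set.Ico 0 τ₀)
  lip : ∃ L : NNReal, LipschitzWith L (deriv R₁) ∧ LipschitzWith L (deriv R₂)
  area_mono : StrictMonoOn (fun σ => sweptArea R₁ R₂ 0 σ) (Set.Icc 0 τ₀)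
  exc_le : ∃ C > 0, ∀ σ ∈ Set.Icc (0:ℝ) τ₀, excess R₁ R₂ σ ≤ C * |sweptArea R₁ R₂ 0 σ|

open Asymptotics Filter Topology

section Calculus

theorem LipschitzWith.isBigO_sub {E F : Type*} [SeminormedAddCommGroup E]
    [SeminormedAddCommGroup F] {K : NNReal} {g : E → F} (hg : LipschitzWith K g) (x₀ : E) :
    (fun x => g x - g x₀) =O[𝓝 x₀] (fun x => x - x₀) :=
  .of_bound K (.of_forall fun x => by simpa [dist_eq_norm] using hg.dist_le_mul x x₀)

variable {E F G : Type*} [NormedAddCommGroup E] [NormedAddCommGroup F] [NormedSpace ℝ F]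
  [NormedAddCommGroup G] [NormedSpace ℝ G]

theorem DifferentiableAt.isBigO_comp_sub {Φ : F → G} {g : E → F} {x₀ : E}
    (hΦ : DifferentiableAt ℝ Φ (g x₀)) (hg : (fun x => g x - g x₀) =O[𝓝 x₀] (fun x => x - x₀)) :
    (fun x => Φ (g x) - Φ (g x₀)) =O[𝓝 x₀] (fun x => x - x₀) := by
  have hgx₀ : Tendsto g (𝓝 x₀) (𝓝 (g x₀)) :=
    tendsto_sub_nhds_zero_iff.1 (hg.trans_tendsto (tendsto_sub_nhds_zero_iff.2 tendsto_id))
  exact (hΦ.isBigO_sub.comp_tendsto hgx₀).trans hg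

variable [NormedSpace ℝ E]

theorem norm_fderiv_fderiv_sub_le (h : E → F) (x y : E) :
    ‖fderiv ℝ (fderiv ℝ h) x - fderiv ℝ (fderiv ℝ h) y‖ ≤
      ‖iteratedFDeriv ℝ 2 h x - iteratedFDeriv ℝ 2 h y‖ := by
  refine ContinuousLinearMap.opNorm_le_bound₂ _ (norm_nonneg _) fun v w => ?_
  have := (iteratedFDeriv ℝ 2 h x - iteratedFDeriv ℝ 2 h y).le_opNorm ![v, w]
  simpa [iteratedFDeriv_two_apply, Fin.prod_univ_two, mul_assoc] using this

theorem LipschitzWith.fderiv_fderiv {h : E → F} {M : NNReal}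
    (hM : LipschitzWith M (iteratedFDeriv ℝ 2 h)) : LipschitzWith M (fderiv ℝ (fderiv ℝ h)) :=
  .of_dist_le_mul fun x y => by
    simpa only [dist_eq_norm] using (norm_fderiv_fderiv_sub_le h x y).trans
      (by simpa only [dist_eq_norm] using hM.dist_le_mul x y)

theorem isBigO_sub_sub_fderiv_sq {g : E → F} {g' : E → E →L[ℝ] F} {x₀ : E}
    (hd : ∀ᶠ x in 𝓝 x₀, HasFDerivAt g (g' x) x)
    (hL : (fun x => g' x - g' x₀) =O[𝓝 x₀] (fun x => x - x₀)) :
    (fun x => g x - g x₀ - g' x₀ (x - x₀)) =O[𝓝 x₀] (fun x => ‖x - x₀‖ ^ 2) := by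
  obtain ⟨c, hc0, hc⟩ := hL.exists_nonneg
  obtain ⟨ε, hε, hball⟩ := Metric.eventually_nhds_iff_ball.1 (hd.and hc.bound)
  refine .of_bound c (Metric.eventually_nhds_iff_ball.2 ⟨ε, hε, fun x hx => ?_⟩)
  have hsub : Metric.closedBall x₀ ‖x - x₀‖ ⊆ Metric.ball x₀ ε :=
    Metric.closedBall_subset_ball (by simpa [dist_eq_norm] using hx)
  have := (convex_closedBall x₀ ‖x - x₀‖).norm_image_sub_le_of_norm_hasFDerivWithin_le'
    (fun z hz => (hball z (hsub hz)).1.hasFDerivWithinAt)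
    (fun z hz => (hball z (hsub hz)).2.trans
      (mul_le_mul_of_nonneg_left (by simpa [dist_eq_norm] using hz) hc0))
    (Metric.mem_closedBall_self (norm_nonneg _)) (y := x) (by simp [dist_eq_norm])
  simpa [sq, mul_assoc] using this

theorem sub_le_sub_of_hasDerivAt_le {φ ψ φ' ψ' : ℝ → ℝ} {a b : ℝ} (hab : a ≤ b)
    (hφ : ∀ s ∈ Icc a b, HasDerivAt φ (φ' s) s) (hψ : ∀ s ∈ Icc a b, HasDerivAt ψ (ψ' s) s)
    (hle : ∀ s ∈ Icc a b, φ' s ≤ ψ' s) : φ b - φ a ≤ ψ b - ψ a := by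
  have hmono : MonotoneOn (fun s => ψ s - φ s) (Icc a b) :=
    monotoneOn_of_hasDerivWithinAt_nonneg (convex_Icc a b)
      (fun s hs => ((hψ s hs).sub (hφ s hs)).continuousAt.continuousWithinAt)
      (fun s hs => ((hψ s (interior_subset hs)).sub (hφ s (interior_subset hs))).hasDerivWithinAt)
      (fun s hs => sub_nonneg.2 (hle s (interior_subset hs)))
  linarith [hmono (left_mem_Icc.2 hab) (right_mem_Icc.2 hab) hab]

end Calculus

section LieDerivative

variable {E F : Type*} [NormedAddCommGroup E] [NormedSpace ℝ E]
  [NormedAddCommGroup F] [NormedSpace ℝ F]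

def lieDeriv (h : E → F) (f : E → E) (x : E) : F :=
  fderiv ℝ h x (f x)

theorem hasFDerivAt_lieDeriv {h : E → F} {f : E → E} {x : E} (hh : ContDiffAt ℝ 2 h x)
    (hf : DifferentiableAt ℝ f x) :
    HasFDerivAt (lieDeriv h f)
      (fderiv ℝ (fderiv ℝ h) x (f x) + (fderiv ℝ h x).comp (fderiv ℝ f x)) x := by
  have hD : HasFDerivAt (fderiv ℝ h) (fderiv ℝ (fderiv ℝ h) x) x :=
    ((hh.fderiv_right (m := 1) le_rfl).differentiableAt one_ne_zero).hasFDerivAt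
  refine (hD.clm_apply hf.hasFDerivAt).congr_fderiv ?_
  ext v
  simp [add_comm, hh.isSymmSndFDerivAt (by simp) v (f x)]

theorem lieDeriv_lieDeriv {h : E → F} {f : E → E} {x : E} (hh : ContDiffAt ℝ 2 h x)
    (hf : DifferentiableAt ℝ f x) (g : E → E) :
    lieDeriv (lieDeriv h f) g x =
      fderiv ℝ (fderiv ℝ h) x (f x) (g x) + fderiv ℝ h x (fderiv ℝ f x (g x)) := by
  rw [lieDeriv, (hasFDerivAt_lieDeriv hh hf).fderiv]
  rfl

theorem isBigO_fderiv_lieDeriv_sub {h : E → F} {f : E → E} {M : NNReal} (hh : ContDiff ℝ 2 h)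
    (hM : LipschitzWith M (fderiv ℝ (fderiv ℝ h))) (hf : ContDiff ℝ 2 f) (x₀ : E) :
    (fun x => fderiv ℝ (lieDeriv h f) x - fderiv ℝ (lieDeriv h f) x₀) =O[𝓝 x₀]
      (fun x => x - x₀) := by
  simp_rw [fun x => (hasFDerivAt_lieDeriv (x := x) hh.contDiffAt
    (hf.differentiable two_ne_zero x)).fderiv]
  exact DifferentiableAt.isBigO_comp_sub
    (Φ := fun p : (E →L[ℝ] E →L[ℝ] F) × E × (E →L[ℝ] F) × (E →L[ℝ] E) =>
      p.1 p.2.1 + p.2.2.1.comp p.2.2.2)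
    (g := fun x => (fderiv ℝ (fderiv ℝ h) x, f x, fderiv ℝ h x, fderiv ℝ f x)) (by fun_prop)
    ((hM.isBigO_sub x₀).prod_left <| (hf.differentiable two_ne_zero x₀).isBigO_sub.prod_left <|
      (((hh.fderiv_right (m := 1) le_rfl).differentiable one_ne_zero x₀).isBigO_sub).prod_left
      ((hf.fderiv_right (m := 1) le_rfl).differentiable one_ne_zero x₀).isBigO_sub)

theorem isBigO_lieDeriv_sub_sub_sq {h : E → F} {f : E → E} {M : NNReal} (hh : ContDiff ℝ 2 h)
    (hM : LipschitzWith M (fderiv ℝ (fderiv ℝ h))) (hf : ContDiff ℝ 2 f) (x₀ : E) :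
    (fun x => lieDeriv h f x - lieDeriv h f x₀ - fderiv ℝ (lieDeriv h f) x₀ (x - x₀)) =O[𝓝 x₀]
      (fun x => ‖x - x₀‖ ^ 2) :=
  isBigO_sub_sub_fderiv_sq
    (.of_forall fun x => (hasFDerivAt_lieDeriv hh.contDiffAt
      (hf.differentiable two_ne_zero x)).differentiableAt.hasFDerivAt)
    (isBigO_fderiv_lieDeriv_sub hh hM hf x₀)

end LieDerivative

section ControlSystem

variable {ι E : Type*} [Fintype ι] [NormedAddCommGroup E] [NormedSpace ℝ E]

theorem norm_sum_smul_le {c : ι → ℝ} (hc : ∀ i, |c i| ≤ 1) (v : ι → E) :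
    ‖∑ i, c i • v i‖ ≤ ∑ i, ‖v i‖ :=
  (norm_sum_le _ _).trans <| Finset.sum_le_sum fun i _ => by
    rw [norm_smul, Real.norm_eq_abs]
    exact mul_le_of_le_one_left (norm_nonneg _) (hc i)

variable {f : ι → E → E} {u U : ι → ℝ → ℝ} {y : ℝ → E} {τ k₀ : ℝ}

theorem norm_sub_le_of_hasDerivAt_sum_smul
    (hy : ∀ s ∈ Icc 0 τ, HasDerivAt y (∑ i, u i s • f i (y s)) s) (hu : ∀ i s, |u i s| ≤ 1)
    (hf : ∀ x, ∑ i, ‖f i x‖ ≤ k₀) {s : ℝ} (hs : s ∈ Icc 0 τ) : ‖y s - y 0‖ ≤ k₀ * s := by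
  simpa using norm_image_sub_le_of_norm_deriv_le_segment'
    (fun s hs => (hy s hs).hasDerivWithinAt)
    (fun s _ => (norm_sum_smul_le (hu · s) _).trans (hf _)) s hs

theorem norm_sub_sub_sum_smul_le {kf : NNReal}
    (hy : ∀ s ∈ Icc 0 τ, HasDerivAt y (∑ i, u i s • f i (y s)) s) (hu : ∀ i s, |u i s| ≤ 1)
    (hf : ∀ x, ∑ i, ‖f i x‖ ≤ k₀) (hf_lip : ∀ i, LipschitzWith kf (f i))
    (hU : ∀ i s, HasDerivAt (U i) (u i s) s) (hU0 : ∀ i, U i 0 = 0) {s : ℝ} (hs : s ∈ Icc 0 τ) :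
    ‖y s - y 0 - ∑ i, U i s • f i (y 0)‖ ≤ Fintype.card ι * kf * k₀ * s ^ 2 := by
  have hsub : Icc 0 s ⊆ Icc 0 τ := Icc_subset_Icc_right hs.2
  have hw : ∀ r ∈ Icc 0 s, HasDerivAt (fun r => y r - y 0 - ∑ i, U i r • f i (y 0))
      (∑ i, u i r • (f i (y r) - f i (y 0))) r := fun r hr =>
    (((hy r (hsub hr)).sub_const (y 0)).sub
      (HasDerivAt.fun_sum fun i _ => (hU i r).smul_const (f i (y 0)))).congr_deriv
      (by simp [smul_sub, Finset.sum_sub_distrib])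
  have hk₀ : 0 ≤ k₀ := (Finset.sum_nonneg fun _ _ => norm_nonneg _).trans (hf (y 0))
  have hw' : ∀ r ∈ Ico 0 s, ‖∑ i, u i r • (f i (y r) - f i (y 0))‖ ≤
      Fintype.card ι * kf * k₀ * s := fun r hr => by
    have hyr : ‖y r - y 0‖ ≤ k₀ * s :=
      (norm_sub_le_of_hasDerivAt_sum_smul hy hu hf (hsub (Ico_subset_Icc_self hr))).trans
        (mul_le_mul_of_nonneg_left hr.2.le hk₀)
    calc _ ≤ ∑ i, ‖f i (y r) - f i (y 0)‖ := norm_sum_smul_le (hu · r) _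
      _ ≤ ∑ _i : ι, kf * (k₀ * s) := Finset.sum_le_sum fun i _ =>
          ((hf_lip i).norm_sub_le _ _).trans (mul_le_mul_of_nonneg_left hyr kf.coe_nonneg)
      _ = _ := by simp only [Finset.sum_const, Finset.card_univ, nsmul_eq_mul]; ring
  simpa [hU0, sq, mul_assoc] using
    norm_image_sub_le_of_norm_deriv_le_segment' (fun r hr => (hw r hr).hasDerivWithinAt) hw' s
      (right_mem_Icc.2 hs.1)

theorem sum_mul_le_sum_lieDeriv_mul_add_sq {ψ : ι → E → ℝ} {kf : NNReal} {c ρ : ℝ}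
    (hc : 0 ≤ c) (hψ : ∀ x ∈ Metric.ball (y 0) ρ,
      ∑ i, |ψ i x - ψ i (y 0) - fderiv ℝ (ψ i) (y 0) (x - y 0)| ≤ c * ‖x - y 0‖ ^ 2)
    (hψ₀ : ∀ i, ψ i (y 0) = 0) (hτ : k₀ * τ < ρ)
    (hy : ∀ s ∈ Icc 0 τ, HasDerivAt y (∑ i, u i s • f i (y s)) s) (hu : ∀ i s, |u i s| ≤ 1)
    (hf : ∀ x, ∑ i, ‖f i x‖ ≤ k₀) (hf_lip : ∀ i, LipschitzWith kf (f i))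
    (hU : ∀ i s, HasDerivAt (U i) (u i s) s) (hU0 : ∀ i, U i 0 = 0) {s : ℝ} (hs : s ∈ Icc 0 τ) :
    ∑ i, u i s * ψ i (y s) ≤ ∑ i, ∑ j, lieDeriv (ψ i) (f j) (y 0) * u i s * U j s +
      (c * k₀ ^ 2 + (∑ i, ‖fderiv ℝ (ψ i) (y 0)‖) * Fintype.card ι * kf * k₀) * s ^ 2 := by
  set D := fun i => fderiv ℝ (ψ i) (y 0)
  set v := ∑ j, U j s • f j (y 0)
  have hk₀ : 0 ≤ k₀ := (Finset.sum_nonneg fun _ _ => norm_nonneg _).trans (hf (y 0))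
  have hys := norm_sub_le_of_hasDerivAt_sum_smul hy hu hf hs
  have hTaylor := hψ (y s) (by
    rw [Metric.mem_ball, dist_eq_norm]
    nlinarith [mul_le_mul_of_nonneg_left hs.2 hk₀])
  have hterm (i : ι) : u i s * ψ i (y s) ≤ u i s * D i v +
      (|ψ i (y s) - ψ i (y 0) - D i (y s - y 0)| + ‖D i‖ * ‖y s - y 0 - v‖) := by
    set e := ψ i (y s) - ψ i (y 0) - D i (y s - y 0)
    set d := D i (y s - y 0 - v)
    have hsplit : u i s * ψ i (y s) - u i s * D i v = u i s * (e + d) := by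
      simp only [e, d, map_sub, hψ₀]; ring
    have hd : |d| ≤ ‖D i‖ * ‖y s - y 0 - v‖ := (D i).le_opNorm _
    have hued : u i s * (e + d) ≤ |e| + |d| := (le_abs_self _).trans <| (abs_mul _ _).trans_le <|
      (mul_le_of_le_one_left (abs_nonneg _) (hu i s)).trans (abs_add_le _ _)
    linarith
  have hlin : ∑ i, u i s * D i v = ∑ i, ∑ j, lieDeriv (ψ i) (f j) (y 0) * u i s * U j s := by
    simp only [v, map_sum, map_smul, smul_eq_mul, Finset.mul_sum]
    exact Finset.sum_congr rfl fun i _ => Finset.sum_congr rfl fun j _ => by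
      show _ = D i (f j (y 0)) * u i s * U j s
      ring
  calc _ ≤ ∑ i, u i s * D i v + (∑ i, |ψ i (y s) - ψ i (y 0) - D i (y s - y 0)| +
          (∑ i, ‖D i‖) * ‖y s - y 0 - v‖) := by
        rw [Finset.sum_mul, ← Finset.sum_add_distrib, ← Finset.sum_add_distrib]
        exact Finset.sum_le_sum fun i _ => hterm i
    _ ≤ ∑ i, u i s * D i v + (c * (k₀ * s) ^ 2 +
          (∑ i, ‖D i‖) * (Fintype.card ι * kf * k₀ * s ^ 2)) := by
        gcongr
        · exact hTaylor.trans
            (mul_le_mul_of_nonneg_left (pow_le_pow_left₀ (norm_nonneg _) hys 2) hc)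
        · exact norm_sub_sub_sum_smul_le hy hu hf hf_lip hU hU0 hs
    _ = _ := by rw [hlin]; ring

end ControlSystem

section SecondOrderExpansion

variable {ι E : Type*} [Fintype ι] [NormedAddCommGroup E] [NormedSpace ℝ E]

theorem exists_sub_le_add_cube {h : E → ℝ} {f : ι → E → E} {x₀ : E} {k₀ : ℝ} {kf M : NNReal}
    (hh : ContDiff ℝ 2 h) (hM : LipschitzWith M (fderiv ℝ (fderiv ℝ h)))
    (hf : ∀ i, ContDiff ℝ 2 (f i)) (hf_lip : ∀ i, LipschitzWith kf (f i))
    (hf_bdd : ∀ x, ∑ i, ‖f i x‖ ≤ k₀) (hx₀ : ∀ i, lieDeriv h (f i) x₀ = 0) :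
    ∃ K ≥ 0, ∃ ρ > 0, ∀ τ, k₀ * τ < ρ →
      ∀ (y : ℝ → E) (u U : ι → ℝ → ℝ) (Q : ℝ → ℝ), y 0 = x₀ →
      (∀ s ∈ Icc 0 τ, HasDerivAt y (∑ i, u i s • f i (y s)) s) → (∀ i s, |u i s| ≤ 1) →
      (∀ i s, HasDerivAt (U i) (u i s) s) → (∀ i, U i 0 = 0) →
      (∀ s ∈ Icc 0 τ,
        HasDerivAt Q (∑ i, ∑ j, lieDeriv (lieDeriv h (f i)) (f j) x₀ * u i s * U j s) s) →
      ∀ t ∈ Icc 0 τ, h (y t) - h x₀ ≤ Q t - Q 0 + K * t ^ 3 := by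
  obtain ⟨c, hc0, hc⟩ := (IsBigO.fun_sum (s := Finset.univ) fun i _ =>
    (isBigO_lieDeriv_sub_sub_sq hh hM (hf i) x₀).norm_left).exists_nonneg
  obtain ⟨ρ, hρ, hball⟩ := Metric.eventually_nhds_iff_ball.1 hc.bound
  have hk₀ : 0 ≤ k₀ := (Finset.sum_nonneg fun _ _ => norm_nonneg _).trans (hf_bdd x₀)
  set K := c * k₀ ^ 2 + (∑ i, ‖fderiv ℝ (lieDeriv h (f i)) x₀‖) * Fintype.card ι * kf * k₀
  refine ⟨K / 3, by positivity, ρ, hρ, fun τ hτ y u U Q hy0 hy hu hU hU0 hQ t ht => ?_⟩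
  subst hy0
  have hsub : Icc 0 t ⊆ Icc 0 τ := Icc_subset_Icc_right ht.2
  have hhy : ∀ s ∈ Icc 0 t,
      HasDerivAt (fun s => h (y s)) (∑ i, u i s * lieDeriv h (f i) (y s)) s := fun s hs =>
    ((hh.differentiable two_ne_zero (y s)).hasFDerivAt.comp_hasDerivAt s
      (hy s (hsub hs))).congr_deriv (by simp [lieDeriv, map_sum])
  have hQK : ∀ s ∈ Icc 0 t, HasDerivAt (fun s => Q s + K / 3 * s ^ 3)
      (∑ i, ∑ j, lieDeriv (lieDeriv h (f i)) (f j) (y 0) * u i s * U j s + K * s ^ 2) s :=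
    fun s hs => ((hQ s (hsub hs)).add ((hasDerivAt_pow 3 s).const_mul (K / 3))).congr_deriv
      (by ring)
  have hTaylor : ∀ x ∈ Metric.ball (y 0) ρ, ∑ i, |lieDeriv h (f i) x - lieDeriv h (f i) (y 0) -
      fderiv ℝ (lieDeriv h (f i)) (y 0) (x - y 0)| ≤ c * ‖x - y 0‖ ^ 2 := fun x hx => by
    have := hball x hx
    rw [Real.norm_of_nonneg (Finset.sum_nonneg fun _ _ => norm_nonneg _), norm_pow, norm_norm]
      at this
    simpa only [Real.norm_eq_abs] using this
  have := sub_le_sub_of_hasDerivAt_le ht.1 hhy hQK fun s hs =>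
    sum_mul_le_sum_lieDeriv_mul_add_sq hc0 hTaylor hx₀ hτ hy hu hf_bdd hf_lip hU hU0 (hsub hs)
  norm_num at this
  linarith

end SecondOrderExpansion

section PlanarCurves

theorem hasDerivAt_sweptArea {R₁ R₂ : ℝ → ℝ} (hR₁ : ContDiff ℝ 1 R₁) (hR₂ : ContDiff ℝ 1 R₂)
    (σ : ℝ) :
    HasDerivAt (sweptArea R₁ R₂ 0) ((1 / 2) * (deriv R₂ σ * R₁ σ - deriv R₁ σ * R₂ σ)) σ :=
  ((((hR₂.continuous_deriv le_rfl).mul hR₁.continuous).sub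
    ((hR₁.continuous_deriv le_rfl).mul hR₂.continuous)).integral_hasStrictDerivAt 0 σ
    ).hasDerivAt.const_mul _

theorem hasDerivAt_quadForm_add_sweptArea (A : Matrix (Fin 2) (Fin 2) ℝ) {R₁ R₂ : ℝ → ℝ}
    (hR₁ : ContDiff ℝ 1 R₁) (hR₂ : ContDiff ℝ 1 R₂) (σ : ℝ) :
    HasDerivAt (fun σ => (1 / 2) * ∑ l, ∑ m, A l m * ![R₁ σ, R₂ σ] l * ![R₁ σ, R₂ σ] m +
        (A 1 0 - A 0 1) * sweptArea R₁ R₂ 0 σ)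
      (∑ l, ∑ m, A l m * ![deriv R₁ σ, deriv R₂ σ] l * ![R₁ σ, R₂ σ] m) σ := by
  have h₁ := (hR₁.differentiable one_ne_zero σ).hasDerivAt
  have h₂ := (hR₂.differentiable one_ne_zero σ).hasDerivAt
  have := (((((h₁.mul h₁).const_mul (A 0 0)).add ((h₁.mul h₂).const_mul (A 0 1))).add
    (((h₂.mul h₁).const_mul (A 1 0)).add ((h₂.mul h₂).const_mul (A 1 1)))).const_mul (1 / 2)).add
    ((hasDerivAt_sweptArea hR₁ hR₂ σ).const_mul (A 1 0 - A 0 1))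
  refine (this.congr_deriv ?_).congr_of_eventuallyEq (.of_forall fun σ => ?_)
  · simp only [Fin.sum_univ_two, Matrix.cons_val_zero, Matrix.cons_val_one,
      Matrix.cons_val_fin_one]
    ring
  · simp only [Fin.sum_univ_two, Matrix.cons_val_zero, Matrix.cons_val_one,
      Matrix.cons_val_fin_one, Pi.mul_apply, Pi.add_apply]
    ring

def rescaledControl (R₁ R₂ : ℝ → ℝ) (ω : ℝ) : Fin 2 → ℝ → ℝ :=
  ![fun s => deriv R₁ (ω * s), fun s => deriv R₂ (ω * s)]

def rescaledCurve (R₁ R₂ : ℝ → ℝ) (ω : ℝ) : Fin 2 → ℝ → ℝ :=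
  ![fun s => ω⁻¹ * R₁ (ω * s), fun s => ω⁻¹ * R₂ (ω * s)]

theorem hasDerivAt_rescaledCurve {R₁ R₂ : ℝ → ℝ} (hR₁ : Differentiable ℝ R₁)
    (hR₂ : Differentiable ℝ R₂) {ω : ℝ} (hω : ω ≠ 0) (i : Fin 2) (s : ℝ) :
    HasDerivAt (rescaledCurve R₁ R₂ ω i) (rescaledControl R₁ R₂ ω i s) s := by
  have key {R : ℝ → ℝ} (hR : Differentiable ℝ R) :
      HasDerivAt (fun s => ω⁻¹ * R (ω * s)) (deriv R (ω * s)) s :=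
    (((hR (ω * s)).hasDerivAt.comp s ((hasDerivAt_id s).const_mul ω)).const_mul ω⁻¹).congr_deriv
      (by field_simp)
  fin_cases i
  exacts [key hR₁, key hR₂]

theorem rescaledCurve_zero {R₁ R₂ : ℝ → ℝ} (h0₁ : R₁ 0 = 0) (h0₂ : R₂ 0 = 0) (ω : ℝ)
    (i : Fin 2) : rescaledCurve R₁ R₂ ω i 0 = 0 := by
  fin_cases i <;> simp [rescaledCurve, h0₁, h0₂]

theorem exists_rescaled_primitive_le (A : Matrix (Fin 2) (Fin 2) ℝ) {R₁ R₂ : ℝ → ℝ}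
    (hR₁ : ContDiff ℝ 1 R₁) (hR₂ : ContDiff ℝ 1 R₂) (h0₁ : R₁ 0 = 0) (h0₂ : R₂ 0 = 0)
    (hA : A 1 0 - A 0 1 ≤ 0) (hS : ∀ σ, ∑ l, ∑ m, A l m * ![R₁ σ, R₂ σ] l * ![R₁ σ, R₂ σ] m ≤ 0)
    {C τ₀ : ℝ} (harea : ∀ σ ∈ Icc 0 τ₀, C * σ ^ 3 ≤ sweptArea R₁ R₂ 0 σ) {ω : ℝ} (hω : 0 < ω) :
    ∃ Q : ℝ → ℝ, (∀ s, HasDerivAt Q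
        (∑ l, ∑ m, A l m * rescaledControl R₁ R₂ ω l s * rescaledCurve R₁ R₂ ω m s) s) ∧
      ∀ t, ω * t ∈ Icc 0 τ₀ → Q t - Q 0 ≤ (A 1 0 - A 0 1) * C * ω * t ^ 3 := by
  refine ⟨fun s => (ω ^ 2)⁻¹ * ((1 / 2) * ∑ l, ∑ m, A l m * ![R₁ (ω * s), R₂ (ω * s)] l *
      ![R₁ (ω * s), R₂ (ω * s)] m + (A 1 0 - A 0 1) * sweptArea R₁ R₂ 0 (ω * s)),
    fun s => ?_, fun t ht => ?_⟩
  · have := ((hasDerivAt_quadForm_add_sweptArea A hR₁ hR₂ (ω * s)).comp s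
      ((hasDerivAt_id s).const_mul ω)).const_mul (ω ^ 2)⁻¹
    refine this.congr_deriv ?_
    simp only [rescaledControl, rescaledCurve, Fin.sum_univ_two, Matrix.cons_val_zero,
      Matrix.cons_val_one, Matrix.cons_val_fin_one]
    field_simp
  · have h0 : sweptArea R₁ R₂ 0 0 = 0 := by simp [sweptArea]
    calc _ = (ω ^ 2)⁻¹ * ((1 / 2) * ∑ l, ∑ m, A l m * ![R₁ (ω * t), R₂ (ω * t)] l *
          ![R₁ (ω * t), R₂ (ω * t)] m + (A 1 0 - A 0 1) * sweptArea R₁ R₂ 0 (ω * t)) := by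
          simp [h0₁, h0₂, h0]
      _ ≤ (ω ^ 2)⁻¹ * ((A 1 0 - A 0 1) * (C * (ω * t) ^ 3)) := by
          gcongr
          linarith [hS (ω * t), mul_le_mul_of_nonpos_left (harea _ ht) hA]
      _ = (A 1 0 - A 0 1) * C * ω * t ^ 3 := by field_simp

end PlanarCurves

namespace IsDrop

variable {R₁ R₂ : ℝ → ℝ} {τ₀ : ℝ}

theorem contDiff₁ (hR : IsDrop R₁ R₂ τ₀) : ContDiff ℝ 1 R₁ :=
  contDiff_one_iff_deriv.2 ⟨hR.diff₁, hR.lip.choose_spec.1.continuous⟩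

theorem contDiff₂ (hR : IsDrop R₁ R₂ τ₀) : ContDiff ℝ 1 R₂ :=
  contDiff_one_iff_deriv.2 ⟨hR.diff₂, hR.lip.choose_spec.2.continuous⟩

theorem abs_rescaledControl_le_one (hR : IsDrop R₁ R₂ τ₀) (ω : ℝ) (i : Fin 2) (s : ℝ) :
    |rescaledControl R₁ R₂ ω i s| ≤ 1 := by
  have h₁ : |deriv R₁ (ω * s)| ≤ 1 := (sq_le_one_iff_abs_le_one _).1
    (by nlinarith [hR.unit (ω * s), sq_nonneg (deriv R₂ (ω * s))])
  have h₂ : |deriv R₂ (ω * s)| ≤ 1 := (sq_le_one_iff_abs_le_one _).1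
    (by nlinarith [hR.unit (ω * s), sq_nonneg (deriv R₁ (ω * s))])
  fin_cases i <;> simpa [rescaledControl]

end IsDrop

section SingularSet

variable {n : ℕ} {f₁ f₂ : Euc n → Euc n} {h : Euc n → ℝ} {x : Euc n}

theorem Sform_eq_sum_lieDeriv_lieDeriv (hh : ContDiffAt ℝ 2 h x) (hf₁ : DifferentiableAt ℝ f₁ x)
    (hf₂ : DifferentiableAt ℝ f₂ x) (w : Fin 2 → ℝ) :
    Sform f₁ f₂ h x w =
      ∑ l, ∑ m, lieDeriv (lieDeriv h (![f₁, f₂] l)) (![f₁, f₂] m) x * w l * w m := by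
  have hD : DifferentiableAt ℝ (fderiv ℝ h) x :=
    (hh.fderiv_right (m := 1) le_rfl).differentiableAt one_ne_zero
  have hc (c : Euc n) :
      fderiv ℝ (fun y => fderiv ℝ h y c) x = (fderiv ℝ (fderiv ℝ h) x).flip c := by
    simp [fderiv_clm_apply hD (differentiableAt_const c)]
  simp only [Sform, Smat, Fin.sum_univ_two, Matrix.cons_val_zero, Matrix.cons_val_one,
    Matrix.cons_val_fin_one, map_add, hc, ContinuousLinearMap.flip_apply,
    lieDeriv_lieDeriv hh hf₁, lieDeriv_lieDeriv hh hf₂]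
  ring

theorem lieDeriv_lieBracket (hh : ContDiffAt ℝ 2 h x) (hf₁ : DifferentiableAt ℝ f₁ x)
    (hf₂ : DifferentiableAt ℝ f₂ x) :
    lieDeriv h (lieBracket f₁ f₂) x =
      lieDeriv (lieDeriv h f₂) f₁ x - lieDeriv (lieDeriv h f₁) f₂ x := by
  rw [lieDeriv_lieDeriv hh hf₂, lieDeriv_lieDeriv hh hf₁,
    hh.isSymmSndFDerivAt (by simp) (f₂ x) (f₁ x), lieDeriv, lieBracket, map_sub]
  ring

end SingularSet

theorem exists_spiral_sub_le_add_cube {n : ℕ} {f₁ f₂ : Euc n → Euc n} {h : Euc n → ℝ}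
    {x₀ : Euc n} {R₁ R₂ : ℝ → ℝ} {τ₀ C : ℝ} (h1 : H1 f₁ f₂) (h3 : H3 h)
    (hx₀ : x₀ ∈ singSet f₁ f₂ h) (hbr : fderiv ℝ h x₀ (lieBracket f₁ f₂ x₀) ≤ 0)
    (hdrop : IsDrop R₁ R₂ τ₀) (hS : ∀ t : ℝ, Sform f₁ f₂ h x₀ ![R₁ t, R₂ t] ≤ 0)
    (harea : ∀ s ∈ Icc 0 τ₀, C * s ^ 3 ≤ sweptArea R₁ R₂ 0 s) :
    ∃ K ≥ 0, ∃ τ₁ > 0, ∀ τ ∈ Ioo 0 τ₁, ∀ y : ℝ → Euc n, y 0 = x₀ →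
      (∀ t ∈ Icc 0 τ, HasDerivAt y
        (deriv R₁ ((τ₀ / τ) * t) • f₁ (y t) + deriv R₂ ((τ₀ / τ) * t) • f₂ (y t)) t) →
      ∀ t ∈ Icc 0 τ,
        h (y t) - h x₀ ≤
          fderiv ℝ h x₀ (lieBracket f₁ f₂ x₀) * C * (τ₀ / τ) * t ^ 3 + K * t ^ 3 := by
  obtain ⟨hf₁, hf₂, ⟨kf, hkf₁, hkf₂⟩, k₀, hk₀⟩ := h1
  obtain ⟨hh, ⟨M, hM⟩, -⟩ := h3
  set A : Matrix (Fin 2) (Fin 2) ℝ :=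
    fun l m => lieDeriv (lieDeriv h (![f₁, f₂] l)) (![f₁, f₂] m) x₀
  have hAB : A 1 0 - A 0 1 = fderiv ℝ h x₀ (lieBracket f₁ f₂ x₀) := (lieDeriv_lieBracket
    hh.contDiffAt (hf₁.differentiable two_ne_zero x₀) (hf₂.differentiable two_ne_zero x₀)).symm
  obtain ⟨K, hK, ρ, hρ, hexpand⟩ := exists_sub_le_add_cube (f := ![f₁, f₂]) hh hM.fderiv_fderiv
    (Fin.forall_fin_two.2 ⟨hf₁, hf₂⟩) (Fin.forall_fin_two.2 ⟨hkf₁, hkf₂⟩)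
    (by simpa [Fin.sum_univ_two] using hk₀) (Fin.forall_fin_two.2 ⟨hx₀.2.1, hx₀.2.2⟩)
  have hk₀0 : 0 ≤ k₀ := (add_nonneg (norm_nonneg _) (norm_nonneg _)).trans (hk₀ x₀)
  refine ⟨K, hK, ρ / (k₀ + 1), div_pos hρ (by linarith), fun τ hτ y hy0 hy t ht => ?_⟩
  have hkτ : k₀ * τ < ρ := by nlinarith [(lt_div_iff₀ (by linarith)).1 hτ.2, hτ.1]
  have hω : 0 < τ₀ / τ := div_pos hdrop.pos hτ.1
  obtain ⟨Q, hQ, hQt⟩ := exists_rescaled_primitive_le A hdrop.contDiff₁ hdrop.contDiff₂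
    hdrop.init₁ hdrop.init₂ (hAB ▸ hbr)
    (fun σ => (Sform_eq_sum_lieDeriv_lieDeriv hh.contDiffAt (hf₁.differentiable two_ne_zero x₀)
      (hf₂.differentiable two_ne_zero x₀) _).symm.trans_le (hS σ)) harea hω
  have hωt : τ₀ / τ * t ∈ Icc 0 τ₀ := ⟨mul_nonneg hω.le ht.1, by
    rw [div_mul_eq_mul_div, div_le_iff₀ hτ.1]
    exact mul_le_mul_of_nonneg_left ht.2 hdrop.pos.le⟩
  have hdecr := hexpand τ hkτ y _ _ Q hy0
    (fun s hs => by simpa [rescaledControl, Fin.sum_univ_two] using hy s hs)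
    (hdrop.abs_rescaledControl_le_one _) (hasDerivAt_rescaledCurve hdrop.diff₁ hdrop.diff₂ hω.ne')
    (rescaledCurve_zero hdrop.init₁ hdrop.init₂ _) (fun s _ => hQ s) t ht
  linarith [hAB ▸ hQt t hωt]

theorem spiral_cubic_decrease_at_singular_point_general {n : ℕ}
    (f₁ f₂ : Euc n → Euc n) (h : Euc n → ℝ)
    (h1 : H1 f₁ f₂) (h3 : H3 h)
    (α : ℝ)
    (h4 : ∀ x ∈ singSet f₁ f₂ h, α < |fderiv ℝ h x (lieBracket f₁ f₂ x)|)
    (x₀ : Euc n) (hx₀ : x₀ ∈ singSet f₁ f₂ h)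
    (hbr : fderiv ℝ h x₀ (lieBracket f₁ f₂ x₀) < 0)
    (R₁ R₂ : ℝ → ℝ) (τ₀ : ℝ) (hdrop : IsDrop R₁ R₂ τ₀)
    (hS : ∀ t : ℝ, Sform f₁ f₂ h x₀ ![R₁ t, R₂ t] ≤ 0)
    (C : ℝ) (hC : 0 < C)
    (harea : ∀ s ∈ Set.Icc (0:ℝ) τ₀, C * s ^ 3 ≤ sweptArea R₁ R₂ 0 s) :
    ∃ τbar > 0, ∀ τ ∈ Set.Ioo (0:ℝ) τbar,
      ∀ y : ℝ → Euc n, y 0 = x₀ →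
        (∀ t ∈ Set.Icc 0 τ,
          HasDerivAt y
            (deriv R₁ ((τ₀ / τ) * t) • f₁ (y t)
              + deriv R₂ ((τ₀ / τ) * t) • f₂ (y t)) t) →
        ∀ t ∈ Set.Icc 0 τ,
          h (y t) - h x₀ ≤
              (C / 2) * fderiv ℝ h x₀ (lieBracket f₁ f₂ x₀) * (τ₀ / τ) * t ^ 3 ∧
          (C / 2) * fderiv ℝ h x₀ (lieBracket f₁ f₂ x₀) * (τ₀ / τ) * t ^ 3 ≤
              -(C * α * τ₀ / 2) * t ^ 3 / τ := by
  obtain ⟨K, hK, τ₁, hτ₁, hspiral⟩ := exists_spiral_sub_le_add_cube h1 h3 hx₀ hbr.le hdrop hS harea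
  set B := fderiv ℝ h x₀ (lieBracket f₁ f₂ x₀)
  have hBα : B ≤ -α := by linarith [abs_of_neg hbr ▸ h4 x₀ hx₀]
  refine ⟨min τ₁ (C * -B * τ₀ / (2 * (K + 1))), lt_min hτ₁
    (div_pos (mul_pos (mul_pos hC (neg_pos.2 hbr)) hdrop.pos) (by linarith)), ?_⟩
  rintro τ ⟨hτ, hτbar⟩ y hy0 hy t ht
  have hKω : K ≤ C / 2 * -B * (τ₀ / τ) := by
    have := (lt_div_iff₀ (by linarith)).1 (lt_min_iff.1 hτbar).2
    rw [← mul_div_assoc, le_div_iff₀ hτ]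
    nlinarith
  have hdecr := hspiral τ ⟨hτ, (lt_min_iff.1 hτbar).1⟩ y hy0 hy t ht
  have ht3 : 0 ≤ t ^ 3 := pow_nonneg ht.1 3
  constructor
  · nlinarith [mul_le_mul_of_nonneg_right hKω ht3]
  · have := mul_le_mul_of_nonneg_left hBα
      (mul_nonneg (mul_pos (half_pos hC) (div_pos hdrop.pos hτ)).le ht3)
    calc _ = C / 2 * (τ₀ / τ) * t ^ 3 * B := by ring
      _ ≤ C / 2 * (τ₀ / τ) * t ^ 3 * -α := this
      _ = _ := by ring

/-- **Corollary (cubic decrease of `h` along a spiraling trajectory).**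
Assume (H1)–(H5) with the constant `α` of (H4) made explicit, let `x₀ ∈ 𝕊` with
`∇h(x₀)·[f₁,f₂](x₀) < 0`, and let `r = R'` be a drop generator of period `τ₀` with
`𝐒(x₀)(R(t)) ≤ 0` for all `t` and `Area(R)|₀^s ≥ C s³` on `[0, τ₀]`. Then there is
`τ̄ > 0` such that for all `τ ∈ (0, τ̄)`, with `ω = τ₀/τ`, the solution `y` of
`ẏ = r¹(ωt) f₁(y) + r²(ωt) f₂(y)`, `y(0) = x₀`, satisfies
`h(y(t)) − h(x₀) ≤ (C/2) ∇h(x₀)·[f₁,f₂](x₀) ω t³ ≤ −(C α τ₀/2) t³/τ` on `[0, τ]`. -/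
theorem spiral_cubic_decrease_at_singular_point {n : ℕ}
    (f₁ f₂ : Euc n → Euc n) (h : Euc n → ℝ)
    (h1 : H1 f₁ f₂) (h3 : H3 h)
    (α : ℝ) (hα : 0 < α)
    (h4 : ∀ x ∈ singSet f₁ f₂ h, α < |fderiv ℝ h x (lieBracket f₁ f₂ x)|)
    (h5 : H5 f₁ f₂ h)
    (x₀ : Euc n) (hx₀ : x₀ ∈ singSet f₁ f₂ h)
    (hbr : fderiv ℝ h x₀ (lieBracket f₁ f₂ x₀) < 0)
    (R₁ R₂ : ℝ → ℝ) (τ₀ : ℝ) (hdrop : IsDrop R₁ R₂ τ₀)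
    (hS : ∀ t : ℝ, Sform f₁ f₂ h x₀ ![R₁ t, R₂ t] ≤ 0)
    (C : ℝ) (hC : 0 < C)
    (harea : ∀ s ∈ Set.Icc (0:ℝ) τ₀, C * s ^ 3 ≤ sweptArea R₁ R₂ 0 s) :
    ∃ τbar > 0, ∀ τ ∈ Set.Ioo (0:ℝ) τbar,
      ∀ y : ℝ → Euc n, y 0 = x₀ →
        (∀ t ∈ Set.Icc 0 τ,
          HasDerivAt y
            (deriv R₁ ((τ₀ / τ) * t) • f₁ (y t)
              + deriv R₂ ((τ₀ / τ) * t) • f₂ (y t)) t) →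
        ∀ t ∈ Set.Icc 0 τ,
          h (y t) - h x₀ ≤
              (C / 2) * fderiv ℝ h x₀ (lieBracket f₁ f₂ x₀) * (τ₀ / τ) * t ^ 3 ∧
          (C / 2) * fderiv ℝ h x₀ (lieBracket f₁ f₂ x₀) * (τ₀ / τ) * t ^ 3 ≤
              -(C * α * τ₀ / 2) * t ^ 3 / τ :=
  spiral_cubic_decrease_at_singular_point_general f₁ f₂ h h1 h3 α h4 x₀ hx₀ hbr R₁ R₂ τ₀ hdrop hS C
    hC harea

end
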